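/- arXiv:1406.3580 — 4 statements merged into one kernel-verified Lean document; each statement's English description precedes it below -/
import Mathlib

section
/- There is a constant C depending only on a₀ > 0 and γ ∈ (1, 2] such that: for every integer h ≤ 0, all reals z, α, μ with |z|, |α|, |μ| ≤ 1/4, and every r ∈ ℝ with |r| ≤ a₀γ^{h+1}, the set S_h = {(k₀, k) ∈ ℝ × [−π, π] : (1+z)² k₀² + ((1+α)(cos k − 1) + r + γ^h μ)² ≤ a₀² γ^{2(h+1)}} has two-dimensional Lebesgue measure at most C γ^{3h/2}. -/
open MeasureTheory Real

/-!
On `S_h` the first term forces `|k₀| ≤ (4/3) a₀γ^{h+1} = O(γ^h)`. In the second term both `r` and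
`γ^h μ` are `O(γ^h)`, so `1 - cos k = O(γ^h)`, and Jordan's inequality `1 - cos k ≥ 2k²/π²` on
`[-π, π]` gives `|k| = O(γ^{h/2})`. Hence `S_h` lies in a rectangle of area `O(γ^{3h/2})`.
-/

lemma abs_le_of_sq_mul_sq_le {c x E : ℝ} (hc : 3 / 4 ≤ c) (hE : 0 ≤ E)
    (h : c ^ 2 * x ^ 2 ≤ E ^ 2) : |x| ≤ 4 / 3 * E := by
  have hcx : |c * x| ≤ E := abs_le_of_sq_le_sq (by rwa [mul_pow]) hE
  rw [abs_mul, abs_of_pos (by linarith)] at hcx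
  nlinarith [abs_nonneg x]

lemma one_sub_cos_le_of_abs_le {α r s k E : ℝ} (hα : |α| ≤ 1 / 4) (hr : |r| ≤ E)
    (h : |(1 + α) * (cos k - 1) + r + s| ≤ E) : 1 - cos k ≤ 4 / 3 * (2 * E + |s|) := by
  have hα' := abs_le.1 hα
  have hcos : 0 ≤ 1 - cos k := sub_nonneg.2 (cos_le_one k)
  have hlin : (1 + α) * (1 - cos k) ≤ 2 * E + |s| := by
    linarith [(abs_le.1 h).1, (abs_le.1 hr).2, le_abs_self s]
  nlinarith

lemma sq_le_mul_one_sub_cos {k : ℝ} (hk : |k| ≤ π) : k ^ 2 ≤ π ^ 2 / 2 * (1 - cos k) := by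
  have hjordan := cos_le_one_sub_mul_cos_sq hk
  have hπ : 0 < π ^ 2 := by positivity
  calc k ^ 2 = π ^ 2 / 2 * (2 / π ^ 2 * k ^ 2) := by field_simp
    _ ≤ π ^ 2 / 2 * (1 - cos k) := by gcongr; linarith

lemma abs_le_of_mem_support {a₀ G E z α μ r k₀ k : ℝ} (hG : 0 ≤ G) (hE : E ≤ 2 * a₀ * G)
    (hz : |z| ≤ 1 / 4) (hα : |α| ≤ 1 / 4) (hμ : |μ| ≤ 1 / 4) (hr : |r| ≤ E) (hk : |k| ≤ π)
    (hle : (1 + z) ^ 2 * k₀ ^ 2 + ((1 + α) * (cos k - 1) + r + G * μ) ^ 2 ≤ E ^ 2) :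
    |k₀| ≤ 3 * a₀ * G ∧ |k| ≤ √(π ^ 2 * (6 * a₀ + 1)) * √G := by
  have hE0 : 0 ≤ E := (abs_nonneg r).trans hr
  have hsq := sq_nonneg ((1 + α) * (cos k - 1) + r + G * μ)
  have hk₀ : |k₀| ≤ 4 / 3 * E :=
    abs_le_of_sq_mul_sq_le (c := 1 + z) (by linarith [(abs_le.1 hz).1]) hE0 (by linarith)
  have hGμ : |G * μ| ≤ G / 4 := by
    rw [abs_mul, abs_of_nonneg hG]; nlinarith
  have hcos := one_sub_cos_le_of_abs_le hα hr
    (abs_le_of_sq_le_sq (by nlinarith [sq_nonneg ((1 + z) * k₀)]) hE0)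
  have hk2 : k ^ 2 ≤ π ^ 2 * (6 * a₀ + 1) * G :=
    calc k ^ 2 ≤ π ^ 2 / 2 * (1 - cos k) := sq_le_mul_one_sub_cos hk
      _ ≤ π ^ 2 * (6 * a₀ + 1) * G := by nlinarith [sq_nonneg π]
  refine ⟨by linarith, ?_⟩
  rw [← sqrt_mul' _ hG, ← sqrt_sq_eq_abs]
  exact sqrt_le_sqrt hk2

lemma volume_le_of_forall_abs_le {s : Set (ℝ × ℝ)} {a b : ℝ} (ha : 0 ≤ a)
    (h : ∀ p ∈ s, |p.1| ≤ a ∧ |p.2| ≤ b) : volume s ≤ ENNReal.ofReal (4 * a * b) := by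
  have hsub : s ⊆ Set.Icc (-a) a ×ˢ Set.Icc (-b) b := fun p hp =>
    ⟨abs_le.1 (h p hp).1, abs_le.1 (h p hp).2⟩
  calc volume s ≤ volume (Set.Icc (-a) a ×ˢ Set.Icc (-b) b) := measure_mono hsub
    _ = ENNReal.ofReal (4 * a * b) := by
      rw [Measure.volume_eq_prod, Measure.prod_prod, Real.volume_Icc, Real.volume_Icc,
        ← ENNReal.ofReal_mul (by linarith)]
      ring_nf

lemma zpow_mul_sqrt_zpow {γ : ℝ} (hγ : 0 < γ) (h : ℤ) :
    γ ^ h * √(γ ^ h) = γ ^ (3 * (h : ℝ) / 2) := by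
  rw [← rpow_intCast, sqrt_eq_rpow, ← rpow_mul hγ.le, ← rpow_add hγ]
  ring_nf

/-- Measure of the first-regime single-scale support: there is `C = C(a₀, γ) > 0`
such that for `h ≤ 0`, `|z|, |α|, |μ| ≤ 1/4` and `|r| ≤ a₀γ^{h+1}`, the set
`S_h = {(k₀,k) ∈ ℝ × [-π,π] : (1+z)²k₀² + ((1+α)(cos k - 1) + r + γ^h μ)² ≤ a₀²γ^{2(h+1)}}`
has Lebesgue measure at most `C γ^{3h/2}`. -/
theorem stmt_7 (a₀ γ : ℝ) (ha₀ : 0 < a₀) (hγ1 : 1 < γ) (hγ2 : γ ≤ 2) :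
    ∃ C > 0, ∀ h : ℤ, h ≤ 0 → ∀ z α μ r : ℝ,
      |z| ≤ 1 / 4 → |α| ≤ 1 / 4 → |μ| ≤ 1 / 4 → |r| ≤ a₀ * γ ^ (h + 1) →
      volume {p : ℝ × ℝ | p.2 ∈ Set.Icc (-Real.pi) Real.pi ∧
          (1 + z) ^ 2 * p.1 ^ 2 +
              ((1 + α) * (Real.cos p.2 - 1) + r + γ ^ h * μ) ^ 2
            ≤ a₀ ^ 2 * γ ^ (2 * (h + 1))}
        ≤ ENNReal.ofReal (C * γ ^ (3 * (h : ℝ) / 2)) := by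
  have hγ : 0 < γ := by linarith
  set B := √(π ^ 2 * (6 * a₀ + 1))
  refine ⟨12 * a₀ * B, by positivity, fun h _ z α μ r hz hα hμ hr => ?_⟩
  have hG : 0 < γ ^ h := zpow_pos hγ h
  have hE : γ ^ (h + 1) = γ * γ ^ h := by rw [zpow_add_one₀ hγ.ne', mul_comm]
  have hE2 : a₀ ^ 2 * γ ^ (2 * (h + 1)) = (a₀ * γ ^ (h + 1)) ^ 2 := by
    rw [mul_comm 2, zpow_mul, zpow_two]; ring
  calc volume _ ≤ ENNReal.ofReal (4 * (3 * a₀ * γ ^ h) * (B * √(γ ^ h))) := by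
        refine volume_le_of_forall_abs_le (by positivity) fun p ⟨hk, hle⟩ =>
          abs_le_of_mem_support hG.le ?_ hz hα hμ hr (abs_le.2 hk) (hE2 ▸ hle)
        rw [hE]; nlinarith [mul_pos ha₀ hG]
    _ = ENNReal.ofReal (12 * a₀ * B * γ ^ (3 * (h : ℝ) / 2)) := by
        rw [← zpow_mul_sqrt_zpow hγ h]; ring_nf
end

section
/- Under the single-scale propagator setup with |z|, |α|, |μ| ≤ 1/4 and |r| ≤ a₀γ^{h+1}, h ≤ 0 an integer, there exists a constant C depending only on a₀ and γ such that ∫_{ℝ×[−π,π]} f_h(𝐤)/e_h(𝐤) dk₀ dk ≤ C γ^{h/2}. Consequently, the Gram vectors A, B ∈ L²(ℝ × [−π, π]) defined by Â = √(f_h)·√(e_h)/D_h and B̂ = √(f_h)/√(e_h) satisfy ‖Â‖_{L²} = ‖B̂‖_{L²} ≤ √C · γ^{h/4}. -/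
open MeasureTheory

set_option maxHeartbeats 1000000

/-- The scale-`h` symbol `D_h(𝐤) = -i k₀(1+z) + (1+α)(cos k - 1) + r + γ^h μ`. -/
noncomputable def Dh (γ z α μ r : ℝ) (h : ℤ) (k₀ k : ℝ) : ℂ :=
  -Complex.I * (k₀ : ℂ) * (1 + (z : ℂ)) +
    (((1 + α) * (Real.cos k - 1) + r + γ ^ h * μ : ℝ) : ℂ)

/-- `e_h(𝐤) = |D_h(𝐤)|`. -/
noncomputable def eh (γ z α μ r : ℝ) (h : ℤ) (k₀ k : ℝ) : ℝ :=
  ‖Dh γ z α μ r h k₀ k‖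

/-- The single-scale cutoff
`f_h(𝐤) = χ₀(γ^{-h} a₀^{-1} e_h(𝐤)) - χ₀(γ^{-(h-1)} a₀^{-1} e_h(𝐤))`. -/
noncomputable def fh (χ₀ : ℝ → ℝ) (γ a₀ z α μ r : ℝ) (h : ℤ) (k₀ k : ℝ) : ℝ :=
  χ₀ (γ ^ (-h) * a₀⁻¹ * eh γ z α μ r h k₀ k) -
    χ₀ (γ ^ (-(h - 1)) * a₀⁻¹ * eh γ z α μ r h k₀ k)

/-- The Gram vector `Â = √f_h · √e_h / D_h`. -/
noncomputable def Ahat (χ₀ : ℝ → ℝ) (γ a₀ z α μ r : ℝ) (h : ℤ) (p : ℝ × ℝ) : ℂ :=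
  ((Real.sqrt (fh χ₀ γ a₀ z α μ r h p.1 p.2) *
      Real.sqrt (eh γ z α μ r h p.1 p.2) : ℝ) : ℂ) / Dh γ z α μ r h p.1 p.2

/-- The Gram vector `B̂ = √f_h / √e_h`. -/
noncomputable def Bhat (χ₀ : ℝ → ℝ) (γ a₀ z α μ r : ℝ) (h : ℤ) (p : ℝ × ℝ) : ℝ :=
  Real.sqrt (fh χ₀ γ a₀ z α μ r h p.1 p.2) / Real.sqrt (eh γ z α μ r h p.1 p.2)

lemma Dh_im (γ z α μ r : ℝ) (h : ℤ) (k₀ k : ℝ) :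
    (Dh γ z α μ r h k₀ k).im = -(k₀ * (1 + z)) := by
  simp only [Dh, Complex.add_im, Complex.mul_im, Complex.mul_re, Complex.neg_im, Complex.neg_re,
    Complex.I_im, Complex.I_re, Complex.ofReal_im, Complex.ofReal_re, Complex.add_re,
    Complex.one_re, Complex.one_im]
  ring

lemma Dh_re (γ z α μ r : ℝ) (h : ℤ) (k₀ k : ℝ) :
    (Dh γ z α μ r h k₀ k).re = (1 + α) * (Real.cos k - 1) + r + γ ^ h * μ := by
  simp only [Dh, Complex.add_re, Complex.mul_im, Complex.mul_re, Complex.neg_im, Complex.neg_re,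
    Complex.I_im, Complex.I_re, Complex.ofReal_im, Complex.ofReal_re,
    Complex.one_re, Complex.one_im, Complex.add_im]
  ring

lemma sqrt_rpow' {γ : ℝ} (hγ : 0 < γ) (a : ℝ) :
    Real.sqrt (γ ^ a) = γ ^ (a / 2) := by
  rw [Real.sqrt_eq_rpow, ← Real.rpow_mul hγ.le, mul_one_div]

lemma sqrt_zpow' {γ : ℝ} (hγ : 0 < γ) (h : ℤ) :
    Real.sqrt (γ ^ h) = γ ^ ((h : ℝ) / 2) := by
  rw [← Real.rpow_intCast γ h, sqrt_rpow' hγ]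

/-- Gram bound for the first regime: there is `C = C(a₀, γ) > 0` such that
`∫_{ℝ×[-π,π]} f_h/e_h ≤ C γ^{h/2}`, and hence the Gram vectors `Â, B̂` have equal
`L²` norms, bounded by `√C · γ^{h/4}`. -/
theorem stmt_10 (γ a₀ : ℝ) (hγ1 : 1 < γ) (hγ2 : γ ≤ 2) (ha₀ : 0 < a₀) :
    ∃ C > 0, ∀ χ₀ : ℝ → ℝ, ContDiff ℝ (⊤ : ℕ∞) χ₀ → (∀ t, χ₀ t ∈ Set.Icc (0 : ℝ) 1) →
      (∀ t, |t| ≤ 1 → χ₀ t = 1) → (∀ t, γ ≤ |t| → χ₀ t = 0) →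
      ∀ h : ℤ, h ≤ 0 → ∀ z α μ r : ℝ,
        |z| ≤ 1 / 4 → |α| ≤ 1 / 4 → |μ| ≤ 1 / 4 → |r| ≤ a₀ * γ ^ (h + 1) →
        (∫ p in (Set.univ ×ˢ Set.Icc (-Real.pi) Real.pi : Set (ℝ × ℝ)),
            fh χ₀ γ a₀ z α μ r h p.1 p.2 / eh γ z α μ r h p.1 p.2)
          ≤ C * γ ^ ((h : ℝ) / 2) ∧
        Real.sqrt (∫ p in (Set.univ ×ˢ Set.Icc (-Real.pi) Real.pi : Set (ℝ × ℝ)),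
            ‖Ahat χ₀ γ a₀ z α μ r h p‖ ^ 2)
          = Real.sqrt (∫ p in (Set.univ ×ˢ Set.Icc (-Real.pi) Real.pi : Set (ℝ × ℝ)),
            ‖Bhat χ₀ γ a₀ z α μ r h p‖ ^ 2) ∧
        Real.sqrt (∫ p in (Set.univ ×ˢ Set.Icc (-Real.pi) Real.pi : Set (ℝ × ℝ)),
            ‖Ahat χ₀ γ a₀ z α μ r h p‖ ^ 2)
          ≤ Real.sqrt C * γ ^ ((h : ℝ) / 4) := by
  have hγ0 : (0 : ℝ) < γ := by linarith
  have hπ : (0 : ℝ) < Real.pi := Real.pi_pos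
  have hK₂ : (0 : ℝ) < 3 * a₀ * γ + 1 := by nlinarith
  refine ⟨8 * Real.pi * γ ^ 2 * Real.sqrt (3 * a₀ * γ + 1), by positivity, ?_⟩
  intro χ₀ _hsm hχ01 hχeq1 hχeq0 h _hh z α μ r hz hα hμ hr
  set C := 8 * Real.pi * γ ^ 2 * Real.sqrt (3 * a₀ * γ + 1) with hCdef
  have hz' : (3 : ℝ) / 4 ≤ 1 + z := by
    rcases abs_le.mp hz with ⟨h1, _⟩; linarith
  have hα' : (3 : ℝ) / 4 ≤ 1 + α := by
    rcases abs_le.mp hα with ⟨h1, _⟩; linarith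
  have hμ' := (abs_le.mp hμ)
  have hT : (0 : ℝ) < γ ^ h := zpow_pos hγ0 h
  have hγne : γ ≠ 0 := hγ0.ne'
  set S : Set (ℝ × ℝ) := Set.univ ×ˢ Set.Icc (-Real.pi) Real.pi with hSdef
  have hS : MeasurableSet S := MeasurableSet.univ.prod measurableSet_Icc
  -- basic facts on e and f
  have he0 : ∀ k₀ k, 0 ≤ eh γ z α μ r h k₀ k := fun k₀ k => norm_nonneg _
  have harg2 : γ ^ (-(h - 1)) = γ * γ ^ (-h) := by
    rw [show -(h - 1) = 1 + -h by ring, zpow_add₀ hγne, zpow_one]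
  have hfh_nonneg : ∀ k₀ k, 0 ≤ fh χ₀ γ a₀ z α μ r h k₀ k := by
    intro k₀ k
    unfold fh
    rw [harg2, show γ * γ ^ (-h) * a₀⁻¹ * eh γ z α μ r h k₀ k
        = γ * (γ ^ (-h) * a₀⁻¹ * eh γ z α μ r h k₀ k) by ring]
    set x := γ ^ (-h) * a₀⁻¹ * eh γ z α μ r h k₀ k with hxdef
    have hx0 : 0 ≤ x := mul_nonneg (by positivity) (he0 k₀ k)
    rcases le_or_gt x 1 with hx1 | hx1
    · rw [hχeq1 x (by rwa [abs_of_nonneg hx0])]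
      have := (hχ01 (γ * x)).2
      linarith
    · rw [hχeq0 (γ * x) (by rw [abs_of_nonneg (by positivity)]; nlinarith)]
      have := (hχ01 x).1
      linarith
  have hfh_le_one : ∀ k₀ k, fh χ₀ γ a₀ z α μ r h k₀ k ≤ 1 := by
    intro k₀ k
    unfold fh
    have h1 := (hχ01 (γ ^ (-h) * a₀⁻¹ * eh γ z α μ r h k₀ k)).2
    have h2 := (hχ01 (γ ^ (-(h - 1)) * a₀⁻¹ * eh γ z α μ r h k₀ k)).1
    linarith
  -- support bounds
  have hzp1 : γ ^ (-h) * γ ^ (h + 1) = γ := by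
    rw [← zpow_add₀ hγne, show -h + (h + 1) = 1 by ring, zpow_one]
  have hzp2 : γ ^ (-h) * γ ^ (h - 1) = γ⁻¹ := by
    rw [← zpow_add₀ hγne, show -h + (h - 1) = -1 by ring, zpow_neg_one]
  have hq1 : γ ^ (-h) * a₀⁻¹ * (a₀ * γ ^ (h + 1)) = γ := by
    rw [show γ ^ (-h) * a₀⁻¹ * (a₀ * γ ^ (h + 1)) = a₀⁻¹ * a₀ * (γ ^ (-h) * γ ^ (h + 1)) by ring,
      inv_mul_cancel₀ ha₀.ne', hzp1, one_mul]
  have hq2 : γ ^ (-h) * a₀⁻¹ * (a₀ * γ ^ (h - 1)) = γ⁻¹ := by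
    rw [show γ ^ (-h) * a₀⁻¹ * (a₀ * γ ^ (h - 1)) = a₀⁻¹ * a₀ * (γ ^ (-h) * γ ^ (h - 1)) by ring,
      inv_mul_cancel₀ ha₀.ne', hzp2, one_mul]
  have hsupp : ∀ k₀ k, fh χ₀ γ a₀ z α μ r h k₀ k ≠ 0 →
      a₀ * γ ^ (h - 1) < eh γ z α μ r h k₀ k ∧ eh γ z α μ r h k₀ k < a₀ * γ ^ (h + 1) := by
    intro k₀ k hne
    have he0' : 0 ≤ eh γ z α μ r h k₀ k := he0 k₀ k
    constructor
    · by_contra hcon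
      push_neg at hcon
      apply hne
      unfold fh
      rw [harg2, show γ * γ ^ (-h) * a₀⁻¹ * eh γ z α μ r h k₀ k
          = γ * (γ ^ (-h) * a₀⁻¹ * eh γ z α μ r h k₀ k) by ring]
      set x := γ ^ (-h) * a₀⁻¹ * eh γ z α μ r h k₀ k with hxdef
      have hx0 : 0 ≤ x := mul_nonneg (by positivity) he0'
      have hx1 : x ≤ γ⁻¹ := by
        calc x ≤ γ ^ (-h) * a₀⁻¹ * (a₀ * γ ^ (h - 1)) :=
              mul_le_mul_of_nonneg_left hcon (by positivity)
          _ = γ⁻¹ := hq2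
      have hγinv : γ⁻¹ ≤ 1 := by rw [inv_le_one_iff₀]; right; exact hγ1.le
      rw [hχeq1 x (by rw [abs_of_nonneg hx0]; linarith),
        hχeq1 (γ * x) (by
          rw [abs_of_nonneg (mul_nonneg hγ0.le hx0)]
          calc γ * x ≤ γ * γ⁻¹ := mul_le_mul_of_nonneg_left hx1 hγ0.le
            _ = 1 := mul_inv_cancel₀ hγne), sub_self]
    · by_contra hcon
      push_neg at hcon
      apply hne
      unfold fh
      rw [harg2, show γ * γ ^ (-h) * a₀⁻¹ * eh γ z α μ r h k₀ k
          = γ * (γ ^ (-h) * a₀⁻¹ * eh γ z α μ r h k₀ k) by ring]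
      set x := γ ^ (-h) * a₀⁻¹ * eh γ z α μ r h k₀ k with hxdef
      have hx1 : γ ≤ x := by
        calc γ = γ ^ (-h) * a₀⁻¹ * (a₀ * γ ^ (h + 1)) := hq1.symm
          _ ≤ x := mul_le_mul_of_nonneg_left hcon (by positivity)
      have hx0 : 0 ≤ x := le_trans hγ0.le hx1
      rw [hχeq0 x (by rwa [abs_of_nonneg hx0]),
        hχeq0 (γ * x) (by rw [abs_of_nonneg (mul_nonneg hγ0.le hx0)]; nlinarith), sub_self]
  -- the bounding box
  set b₀ : ℝ := 2 * a₀ * γ * γ ^ h with hb₀def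
  set b₁ : ℝ := Real.pi * Real.sqrt (3 * a₀ * γ + 1) * γ ^ ((h : ℝ) / 2) with hb₁def
  set M : ℝ := γ ^ (1 - h) * a₀⁻¹ with hMdef
  have hrp : (0 : ℝ) < γ ^ ((h : ℝ) / 2) := Real.rpow_pos_of_pos hγ0 _
  have hb₀ : 0 < b₀ := by positivity
  have hb₁ : 0 < b₁ := by positivity
  have hM : 0 < M := by positivity
  set R' : Set (ℝ × ℝ) := Set.Icc (-b₀) b₀ ×ˢ Set.Icc (-b₁) b₁ with hR'def
  have hR : MeasurableSet R' := measurableSet_Icc.prod measurableSet_Icc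
  have hzp3 : γ ^ (h + 1) = γ ^ h * γ := by rw [zpow_add₀ hγne, zpow_one]
  have hπ2 : (0 : ℝ) < Real.pi ^ 2 := by positivity
  have hbox : ∀ p : ℝ × ℝ, p ∈ S → fh χ₀ γ a₀ z α μ r h p.1 p.2 ≠ 0 → p ∈ R' := by
    intro p hp hne
    obtain ⟨hlo, hhi⟩ := hsupp p.1 p.2 hne
    have hp2 : p.2 ∈ Set.Icc (-Real.pi) Real.pi := hp.2
    refine Set.mem_prod.2 ⟨?_, ?_⟩
    · -- |p.1| ≤ b₀
      have him : |p.1| * (1 + z) ≤ eh γ z α μ r h p.1 p.2 := by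
        have := Complex.abs_im_le_norm (Dh γ z α μ r h p.1 p.2)
        rwa [Dh_im, abs_neg, abs_mul, abs_of_pos (by linarith : (0:ℝ) < 1 + z)] at this
      have habs : |p.1| ≤ b₀ := by
        rw [hzp3] at hhi
        have h34 : 3 / 4 * |p.1| ≤ |p.1| * (1 + z) := by
          have := abs_nonneg p.1; nlinarith
        rw [hb₀def]; nlinarith
      exact Set.mem_Icc.2 (abs_le.mp habs)
    · -- |p.2| ≤ b₁
      have hre : |(1 + α) * (Real.cos p.2 - 1) + r + γ ^ h * μ| ≤ eh γ z α μ r h p.1 p.2 := by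
        have := Complex.abs_re_le_norm (Dh γ z α μ r h p.1 p.2)
        rwa [Dh_re] at this
      set c := Real.cos p.2 with hcdef
      have hc1 : c ≤ 1 := Real.cos_le_one _
      have hcos : c ≤ 1 - 2 / Real.pi ^ 2 * p.2 ^ 2 :=
        Real.cos_le_one_sub_mul_cos_sq (abs_le.2 ⟨hp2.1, hp2.2⟩)
      have hre1 : -(eh γ z α μ r h p.1 p.2) ≤ (1 + α) * (c - 1) + r + γ ^ h * μ :=
        (abs_le.mp hre).1
      have hμ2 : γ ^ h * μ ≤ γ ^ h * (1 / 4) := mul_le_mul_of_nonneg_left hμ'.2 hT.le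
      have hr2 : r ≤ a₀ * γ ^ (h + 1) := (abs_le.mp hr).2
      have h2 : (1 + α) * (1 - c) < a₀ * γ ^ (h + 1) + a₀ * γ ^ (h + 1) + γ ^ h * (1 / 4) := by
        nlinarith
      have h3 : 3 / 4 * (1 - c) ≤ (1 + α) * (1 - c) :=
        mul_le_mul_of_nonneg_right hα' (by linarith)
      have hinv : (Real.pi ^ 2)⁻¹ * Real.pi ^ 2 = 1 := inv_mul_cancel₀ hπ2.ne'
      have h4 : 2 * p.2 ^ 2 ≤ Real.pi ^ 2 * (1 - c) := by
        have h4a : 2 / Real.pi ^ 2 * p.2 ^ 2 ≤ 1 - c := by linarith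
        have h4b := mul_le_mul_of_nonneg_left h4a hπ2.le
        rw [show Real.pi ^ 2 * (2 / Real.pi ^ 2 * p.2 ^ 2)
            = 2 * p.2 ^ 2 * (Real.pi ^ 2 / Real.pi ^ 2) by ring, div_self hπ2.ne', mul_one] at h4b
        exact h4b
      have h5 : p.2 ^ 2 ≤ Real.pi ^ 2 * (3 * a₀ * γ + 1) * γ ^ h := by
        rw [hzp3] at h2
        nlinarith [hπ2, hT, ha₀, hγ0]
      have hb : Real.sqrt (Real.pi ^ 2 * (3 * a₀ * γ + 1) * γ ^ h) = b₁ := by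
        rw [show Real.pi ^ 2 * (3 * a₀ * γ + 1) * γ ^ h
            = Real.pi ^ 2 * ((3 * a₀ * γ + 1) * γ ^ h) by ring,
          Real.sqrt_mul (by positivity), Real.sqrt_mul hK₂.le,
          Real.sqrt_sq hπ.le, sqrt_zpow' hγ0, hb₁def]
        ring
      have habs : |p.2| ≤ b₁ := by
        rw [← Real.sqrt_sq_eq_abs, ← hb]
        exact Real.sqrt_le_sqrt h5
      exact Set.mem_Icc.2 (abs_le.mp habs)
  -- volume of the box
  have hvol : volume R' = ENNReal.ofReal (2 * b₀) * ENNReal.ofReal (2 * b₁) := by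
    rw [hR'def, Measure.volume_eq_prod, Measure.prod_prod, Real.volume_Icc, Real.volume_Icc,
      show b₀ - -b₀ = 2 * b₀ by ring, show b₁ - -b₁ = 2 * b₁ by ring]
  have hvolne : volume R' ≠ ⊤ := by
    rw [hvol]
    exact ENNReal.mul_ne_top ENNReal.ofReal_ne_top ENNReal.ofReal_ne_top
  have hGint : Integrable (R'.indicator fun _ => M) (volume.restrict S) := by
    refine (integrable_indicator_iff hR).2 ?_
    refine integrableOn_const (ne_of_lt ?_)
    exact lt_of_le_of_lt (Measure.restrict_apply_le _ _) (lt_top_iff_ne_top.2 hvolne)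
  have hFG : ∀ p ∈ S, fh χ₀ γ a₀ z α μ r h p.1 p.2 / eh γ z α μ r h p.1 p.2
      ≤ R'.indicator (fun _ => M) p := by
    intro p hp
    by_cases h0 : fh χ₀ γ a₀ z α μ r h p.1 p.2 = 0
    · rw [h0, zero_div]
      exact Set.indicator_nonneg (fun _ _ => hM.le) p
    · have hpR := hbox p hp h0
      rw [Set.indicator_of_mem hpR]
      have hlo := (hsupp p.1 p.2 h0).1
      have hepos : 0 < eh γ z α μ r h p.1 p.2 := lt_trans (by positivity) hlo
      rw [div_le_iff₀ hepos]
      have h1M : 1 = M * (a₀ * γ ^ (h - 1)) := by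
        rw [hMdef, show γ ^ (1 - h) * a₀⁻¹ * (a₀ * γ ^ (h - 1))
            = a₀⁻¹ * a₀ * (γ ^ (1 - h) * γ ^ (h - 1)) by ring,
          inv_mul_cancel₀ ha₀.ne', ← zpow_add₀ hγne,
          show 1 - h + (h - 1) = 0 by ring, zpow_zero]
        norm_num
      have hMe : 1 ≤ M * eh γ z α μ r h p.1 p.2 := by
        rw [h1M]
        exact mul_le_mul_of_nonneg_left hlo.le hM.le
      linarith [hfh_le_one p.1 p.2]
  have hzp4 : γ ^ h * γ ^ (1 - h) = γ := by
    rw [← zpow_add₀ hγne, show h + (1 - h) = 1 by ring, zpow_one]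
  have hinva : a₀ * a₀⁻¹ = 1 := mul_inv_cancel₀ ha₀.ne'
  have part1 : (∫ p in S, fh χ₀ γ a₀ z α μ r h p.1 p.2 / eh γ z α μ r h p.1 p.2)
      ≤ C * γ ^ ((h : ℝ) / 2) := by
    calc (∫ p in S, fh χ₀ γ a₀ z α μ r h p.1 p.2 / eh γ z α μ r h p.1 p.2)
        ≤ ∫ p in S, R'.indicator (fun _ => M) p := by
          refine integral_mono_of_nonneg
            (Filter.Eventually.of_forall fun p => div_nonneg (hfh_nonneg _ _) (he0 _ _))
            hGint ?_
          exact (ae_restrict_iff' hS).2 (Filter.Eventually.of_forall hFG)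
      _ = ((volume.restrict S) R').toReal * M := by
          rw [integral_indicator_const _ hR, smul_eq_mul, measureReal_def]
      _ ≤ (volume R').toReal * M := by
          refine mul_le_mul_of_nonneg_right
            (ENNReal.toReal_mono hvolne (Measure.restrict_apply_le _ _)) hM.le
      _ = 2 * b₀ * (2 * b₁) * M := by
          rw [hvol, ENNReal.toReal_mul, ENNReal.toReal_ofReal (by positivity),
            ENNReal.toReal_ofReal (by positivity)]
      _ = C * γ ^ ((h : ℝ) / 2) := by
          rw [hb₀def, hb₁def, hMdef, hCdef]
          linear_combination
            (8 * Real.pi * Real.sqrt (3 * a₀ * γ + 1) * γ ^ ((h : ℝ) / 2) * a₀ * a₀⁻¹ * γ) * hzp4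
            + (8 * Real.pi * Real.sqrt (3 * a₀ * γ + 1) * γ ^ ((h : ℝ) / 2) * γ ^ 2) * hinva
  -- pointwise identities for the Gram vectors
  have hpt : ∀ p : ℝ × ℝ,
      ‖Ahat χ₀ γ a₀ z α μ r h p‖ ^ 2 = fh χ₀ γ a₀ z α μ r h p.1 p.2 / eh γ z α μ r h p.1 p.2
      ∧ ‖Bhat χ₀ γ a₀ z α μ r h p‖ ^ 2
        = fh χ₀ γ a₀ z α μ r h p.1 p.2 / eh γ z α μ r h p.1 p.2 := by
    intro p
    have hf' : 0 ≤ fh χ₀ γ a₀ z α μ r h p.1 p.2 := hfh_nonneg _ _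
    have he' : 0 ≤ eh γ z α μ r h p.1 p.2 := he0 _ _
    constructor
    · rw [Ahat, norm_div, Complex.norm_real, Real.norm_eq_abs,
        abs_of_nonneg (mul_nonneg (Real.sqrt_nonneg _) (Real.sqrt_nonneg _)), div_pow,
        mul_pow, Real.sq_sqrt hf', Real.sq_sqrt he']
      show fh χ₀ γ a₀ z α μ r h p.1 p.2 * eh γ z α μ r h p.1 p.2
          / eh γ z α μ r h p.1 p.2 ^ 2 = _
      rcases eq_or_lt_of_le he' with he'' | he''
      · rw [← he'']; simp
      · rw [sq, mul_div_mul_right _ _ he''.ne']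
    · rw [Bhat, Real.norm_eq_abs, sq_abs, div_pow, Real.sq_sqrt hf', Real.sq_sqrt he']
  have hIA : (∫ p in S, ‖Ahat χ₀ γ a₀ z α μ r h p‖ ^ 2)
      = ∫ p in S, fh χ₀ γ a₀ z α μ r h p.1 p.2 / eh γ z α μ r h p.1 p.2 :=
    integral_congr_ae (Filter.Eventually.of_forall fun p => (hpt p).1)
  have hIB : (∫ p in S, ‖Bhat χ₀ γ a₀ z α μ r h p‖ ^ 2)
      = ∫ p in S, fh χ₀ γ a₀ z α μ r h p.1 p.2 / eh γ z α μ r h p.1 p.2 :=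
    integral_congr_ae (Filter.Eventually.of_forall fun p => (hpt p).2)
  refine ⟨part1, by rw [hIA, hIB], ?_⟩
  rw [hIA]
  calc Real.sqrt (∫ p in S, fh χ₀ γ a₀ z α μ r h p.1 p.2 / eh γ z α μ r h p.1 p.2)
      ≤ Real.sqrt (C * γ ^ ((h : ℝ) / 2)) := Real.sqrt_le_sqrt part1
    _ = Real.sqrt C * γ ^ ((h : ℝ) / 4) := by
        rw [Real.sqrt_mul (by positivity), sqrt_rpow' hγ0, show (h : ℝ) / 2 / 2 = (h : ℝ) / 4 by ring]
end

section
/- Under the quasi-particle propagator setup with |z|, |α| ≤ 1/4, there are constants c, C > 0 depending only on a₀ and γ such that for every integer h with a₀γ^{h+1} ≤ c·r̄, the set T_h = {(k₀, k) ∈ ℝ × [−π, π] : k ≥ −p_F/2 and (1+z)² k₀² + (1+α)² (cos k − cos p_F)² ≤ a₀² γ^{2(h+1)}} has two-dimensional Lebesgue measure at most C γ^{2h} / √r̄. -/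
/-!
With `ε = a₀ γ^(h+1)` and `δ = 4ε/3`, the bounds `|1 + z|, |1 + α| ≥ 3/4` put `T_h` inside
`|k₀| ≤ δ`, `|cos k - cos p_F| ≤ δ`. Since `δ < r̄/2 ≤ cos (p_F/2) - cos p_F`, the cut
`k ≥ -p_F/2` forces `k ≥ 0`, so `k` lies in `[arccos (cos p_F + δ), arccos (cos p_F - δ)]`.
On this interval `sin k ≥ √r̄` (because `δ ≤ r̄/3` and `cos p_F ≥ 1/2`), so comparing with
`∫ sin = Δ cos ≤ 2δ` its length is at most `2δ/√r̄`, and `|T_h| ≤ 4δ²/√r̄`.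
-/

open MeasureTheory Real Set

theorem sin_mul_sub_le_cos_sub_cos {a b : ℝ} (ha : -(π / 2) ≤ a) (hab : a ≤ b)
    (hb : b ≤ π / 2) : sin a * (b - a) ≤ cos a - cos b := by
  have hmono : ∫ _ in a..b, sin a ≤ ∫ x in a..b, sin x :=
    intervalIntegral.integral_mono_on hab intervalIntegrable_const
      (continuous_sin.intervalIntegrable a b) fun x hx =>
        sin_le_sin_of_le_of_le_pi_div_two ha (hx.2.trans hb) hx.1
  rwa [intervalIntegral.integral_const, smul_eq_mul, integral_sin, mul_comm] at hmono

theorem sqrt_one_sub_sq_mul_arccos_sub_arccos_le {x y : ℝ} (hx : 0 ≤ x) (hxy : x ≤ y)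
    (hy : y ≤ 1) : √(1 - y ^ 2) * (arccos x - arccos y) ≤ y - x := by
  have h := sin_mul_sub_le_cos_sub_cos (by linarith [arccos_nonneg y, pi_pos])
    (arccos_le_arccos hxy) (arccos_le_pi_div_two.mpr hx)
  rwa [sin_arccos, cos_arccos (by linarith) hy, cos_arccos (by linarith) (hxy.trans hy)] at h

theorem arccos_sub_sub_arccos_add_le {c δ : ℝ} (hc : 1 / 2 ≤ c) (hc1 : c < 1) (hδ0 : 0 ≤ δ)
    (hδ : δ ≤ (1 - c) / 3) : arccos (c - δ) - arccos (c + δ) ≤ 2 * δ / √(1 - c) := by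
  have hwidth := sqrt_one_sub_sq_mul_arccos_sub_arccos_le (x := c - δ) (y := c + δ)
    (by linarith) (by linarith) (by linarith)
  have hsqrt : √(1 - c) ≤ √(1 - (c + δ) ^ 2) := by
    apply sqrt_le_sqrt
    nlinarith
  rw [le_div_iff₀ (sqrt_pos.mpr (by linarith)), mul_comm]
  have : 0 ≤ arccos (c - δ) - arccos (c + δ) := sub_nonneg.mpr (arccos_le_arccos (by linarith))
  nlinarith

theorem one_sub_cos_div_two_le_cos_half_sub_cos {x : ℝ} (hx : 0 ≤ cos (x / 2)) :
    (1 - cos x) / 2 ≤ cos (x / 2) - cos x := by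
  have hdouble : cos x = 2 * cos (x / 2) ^ 2 - 1 := by
    rw [← cos_two_mul]; ring_nf
  nlinarith [cos_le_one (x / 2)]

theorem mem_Icc_arccos_of_abs_cos_sub_le {k c δ : ℝ} (hk0 : 0 ≤ k) (hkπ : k ≤ π)
    (h : |cos k - c| ≤ δ) : k ∈ Icc (arccos (c + δ)) (arccos (c - δ)) := by
  obtain ⟨hlo, hhi⟩ := abs_le.mp h
  rw [← arccos_cos hk0 hkπ]
  exact ⟨arccos_le_arccos (by linarith), arccos_le_arccos (by linarith)⟩

theorem abs_le_div_of_sq_mul_sq_le {s t e m : ℝ} (hm : 0 < m) (hms : m ≤ |s|) (he : 0 ≤ e)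
    (h : s ^ 2 * t ^ 2 ≤ e ^ 2) : |t| ≤ e / m := by
  have hst : |s * t| ≤ e := abs_le_of_sq_le_sq (by rwa [mul_pow]) he
  rw [abs_mul] at hst
  rw [le_div_iff₀ hm]
  nlinarith [abs_nonneg t]

theorem support_subset_box {pF z α ε : ℝ} (hpFπ : pF ≤ π) (hz : |z| ≤ 1 / 4)
    (hα : |α| ≤ 1 / 4) (hε : 0 ≤ ε) (hεr : 4 / 3 * ε < (1 - cos pF) / 2) :
    {p : ℝ × ℝ | p.2 ∈ Icc (-π) π ∧ -pF / 2 ≤ p.2 ∧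
        (1 + z) ^ 2 * p.1 ^ 2 + (1 + α) ^ 2 * (cos p.2 - cos pF) ^ 2 ≤ ε ^ 2} ⊆
      Icc (-(4 / 3 * ε)) (4 / 3 * ε) ×ˢ
        Icc (arccos (cos pF + 4 / 3 * ε)) (arccos (cos pF - 4 / 3 * ε)) := by
  rintro ⟨k₀, k⟩ ⟨hk, hkpF, hq⟩
  have hz' : 3 / 4 ≤ |1 + z| := by linarith [abs_le.mp hz, le_abs_self (1 + z)]
  have hα' : 3 / 4 ≤ |1 + α| := by linarith [abs_le.mp hα, le_abs_self (1 + α)]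
  have hk₀ : |k₀| ≤ 4 / 3 * ε := by
    convert abs_le_div_of_sq_mul_sq_le (t := k₀) (by norm_num) hz' hε
      (by nlinarith [sq_nonneg (1 + α), sq_nonneg (cos k - cos pF)]) using 1
    ring
  have hcos : |cos k - cos pF| ≤ 4 / 3 * ε := by
    convert abs_le_div_of_sq_mul_sq_le (t := cos k - cos pF) (by norm_num) hα' hε
      (by nlinarith [sq_nonneg (1 + z), sq_nonneg k₀]) using 1
    ring
  -- the constraint `-pF / 2 ≤ k` excludes the other Fermi point `-pF`
  have hk0 : 0 ≤ k := by
    by_contra! hneg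
    have hhalf : cos (pF / 2) ≤ cos k := by
      rw [← cos_neg k]
      exact cos_le_cos_of_nonneg_of_le_pi (by linarith) (by linarith) (by linarith)
    have := one_sub_cos_div_two_le_cos_half_sub_cos (cos_nonneg_of_mem_Icc
      (x := pF / 2) ⟨by linarith [pi_pos], by linarith⟩)
    linarith [(abs_le.mp hcos).2]
  exact ⟨abs_le.mp hk₀, mem_Icc_arccos_of_abs_cos_sub_le hk0 hk.2 hcos⟩

theorem stmt_13_general (a₀ γ : ℝ) (ha₀ : 0 < a₀) (hγ1 : 1 < γ) :
    ∃ c > 0, ∃ C > 0, ∀ pF z α : ℝ, pF ∈ Set.Ioc (0 : ℝ) (Real.pi / 3) →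
      |z| ≤ 1 / 4 → |α| ≤ 1 / 4 →
      ∀ h : ℤ, a₀ * γ ^ (h + 1) ≤ c * (1 - Real.cos pF) →
      volume {p : ℝ × ℝ | p.2 ∈ Set.Icc (-Real.pi) Real.pi ∧ -pF / 2 ≤ p.2 ∧
          (1 + z) ^ 2 * p.1 ^ 2 +
              (1 + α) ^ 2 * (Real.cos p.2 - Real.cos pF) ^ 2
            ≤ a₀ ^ 2 * γ ^ (2 * (h + 1))}
        ≤ ENNReal.ofReal (C * γ ^ (2 * (h : ℝ)) / Real.sqrt (1 - Real.cos pF)) := by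
  refine ⟨1 / 4, by norm_num, 64 / 9 * a₀ ^ 2 * γ ^ 2, by positivity, ?_⟩
  rintro pF z α ⟨hpF0, hpF3⟩ hz hα h hscale
  have hγ : 0 < γ := by linarith
  have hcos_ge : 1 / 2 ≤ cos pF := by
    rw [← cos_pi_div_three]
    exact cos_le_cos_of_nonneg_of_le_pi hpF0.le (by linarith [pi_pos]) hpF3
  have hcos_lt : cos pF < 1 := by
    rw [← cos_zero]
    exact cos_lt_cos_of_nonneg_of_le_pi le_rfl (by linarith [pi_pos]) hpF0
  set ε := a₀ * γ ^ (h + 1) with hε_def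
  have hε : 0 < ε := by positivity
  have hradius : a₀ ^ 2 * γ ^ (2 * (h + 1)) = ε ^ 2 := by
    rw [mul_pow, ← zpow_natCast (γ ^ (h + 1)), ← zpow_mul]; ring_nf
  have hγ_pow : γ ^ 2 * γ ^ (2 * (h : ℝ)) = (γ ^ (h + 1)) ^ 2 := by
    rw [show 2 * (h : ℝ) = ((2 * h : ℤ) : ℝ) by push_cast; ring, rpow_intCast,
      ← zpow_natCast, ← zpow_natCast, ← zpow_mul, ← zpow_add₀ hγ.ne']
    ring_nf
  rw [hradius]
  calc _ ≤ volume (Icc (-(4 / 3 * ε)) (4 / 3 * ε) ×ˢ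
          Icc (arccos (cos pF + 4 / 3 * ε)) (arccos (cos pF - 4 / 3 * ε))) :=
        measure_mono (support_subset_box (by linarith [pi_pos]) hz hα hε.le
          (by linarith))
    _ = ENNReal.ofReal (2 * (4 / 3 * ε)) *
          ENNReal.ofReal (arccos (cos pF - 4 / 3 * ε) - arccos (cos pF + 4 / 3 * ε)) := by
        rw [Measure.volume_eq_prod, Measure.prod_prod, Real.volume_Icc, Real.volume_Icc]
        ring_nf
    _ ≤ ENNReal.ofReal (2 * (4 / 3 * ε)) *
          ENNReal.ofReal (2 * (4 / 3 * ε) / √(1 - cos pF)) := by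
        gcongr
        exact arccos_sub_sub_arccos_add_le hcos_ge hcos_lt (by positivity) (by linarith)
    _ = _ := by
        rw [← ENNReal.ofReal_mul (by positivity), mul_assoc _ (γ ^ 2), hγ_pow, hε_def]
        ring_nf

/-- Measure of the second-regime quasi-particle support: there are
`c, C > 0` depending only on `a₀, γ` such that for `p_F ∈ (0, π/3]`,
`|z|, |α| ≤ 1/4` and scales `h` with `a₀γ^{h+1} ≤ c·r̄`, `r̄ = 1 - cos p_F`, the set
`T_h = {(k₀,k) ∈ ℝ×[-π,π] : k ≥ -p_F/2, (1+z)²k₀² + (1+α)²(cos k - cos p_F)² ≤ a₀²γ^{2(h+1)}}`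
has Lebesgue measure at most `C γ^{2h}/√r̄`. -/
theorem stmt_13 (a₀ γ : ℝ) (ha₀ : 0 < a₀) (hγ1 : 1 < γ) (hγ2 : γ ≤ 2) :
    ∃ c > 0, ∃ C > 0, ∀ pF z α : ℝ, pF ∈ Set.Ioc (0 : ℝ) (Real.pi / 3) →
      |z| ≤ 1 / 4 → |α| ≤ 1 / 4 →
      ∀ h : ℤ, a₀ * γ ^ (h + 1) ≤ c * (1 - Real.cos pF) →
      volume {p : ℝ × ℝ | p.2 ∈ Set.Icc (-Real.pi) Real.pi ∧ -pF / 2 ≤ p.2 ∧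
          (1 + z) ^ 2 * p.1 ^ 2 +
              (1 + α) ^ 2 * (Real.cos p.2 - Real.cos pF) ^ 2
            ≤ a₀ ^ 2 * γ ^ (2 * (h + 1))}
        ≤ ENNReal.ofReal (C * γ ^ (2 * (h : ℝ)) / Real.sqrt (1 - Real.cos pF)) :=
  stmt_13_general a₀ γ ha₀ hγ1
end

section
/- Under the quasi-particle setup with |α| ≤ 1/4, there are constants c, C > 0 depending only on a₀ and γ such that for every integer h with a₀γ^{h+1} ≤ c·r̄ and every k ∈ [−π, π] with k ≥ −p_F/2 and |(1+α)(cos k − cos p_F)| ≤ a₀ γ^{h+1}, one has |k − p_F| ≤ C γ^h / √r̄ and |sin(k − p_F)| ≤ C γ^h / √r̄. -/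
/-- Second-regime momentum localization near the Fermi point `+p_F`: there are
`c, C > 0` depending only on `a₀, γ` such that for `p_F ∈ (0, π/3]`, `|α| ≤ 1/4`,
scales `h` with `a₀γ^{h+1} ≤ c·r̄` (`r̄ = 1 - cos p_F`), and momenta
`k ∈ [-π,π]` with `k ≥ -p_F/2` and `|(1+α)(cos k - cos p_F)| ≤ a₀γ^{h+1}`, one has
`|k - p_F| ≤ C γ^h/√r̄` and `|sin(k - p_F)| ≤ C γ^h/√r̄`. -/
theorem stmt_14 (a₀ γ : ℝ) (ha₀ : 0 < a₀) (hγ1 : 1 < γ) (hγ2 : γ ≤ 2) :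
    ∃ c > 0, ∃ C > 0, ∀ pF α : ℝ, pF ∈ Set.Ioc (0 : ℝ) (Real.pi / 3) →
      |α| ≤ 1 / 4 →
      ∀ h : ℤ, a₀ * γ ^ (h + 1) ≤ c * (1 - Real.cos pF) →
      ∀ k ∈ Set.Icc (-Real.pi) Real.pi, -pF / 2 ≤ k →
        |(1 + α) * (Real.cos k - Real.cos pF)| ≤ a₀ * γ ^ (h + 1) →
        |k - pF| ≤ C * γ ^ (h : ℝ) / Real.sqrt (1 - Real.cos pF) ∧
        |Real.sin (k - pF)| ≤ C * γ ^ (h : ℝ) / Real.sqrt (1 - Real.cos pF) := by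
  have hγ0 : (0:ℝ) < γ := by linarith
  refine ⟨1, one_pos, 20 * a₀ * γ, by positivity, ?_⟩
  rintro pF α ⟨hpF0, hpF3⟩ hα h _ k ⟨hk1, hk2⟩ hkpF hcut
  have hπ := Real.pi_pos
  have hγh : (0:ℝ) < γ ^ h := zpow_pos hγ0 h
  have hXpos : 0 < a₀ * γ ^ (h + 1) := mul_pos ha₀ (zpow_pos hγ0 _)
  have hγh1 : γ ^ (h + 1) = γ * γ ^ h := by
    rw [zpow_add_one₀ hγ0.ne']; ring
  have hrpow : γ ^ (h : ℝ) = γ ^ h := Real.rpow_intCast γ h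
  -- bound on |cos k - cos pF|
  have hα1 : (3:ℝ)/4 ≤ 1 + α := by
    rcases abs_le.mp hα with ⟨h1, _⟩; linarith
  have hΔ : |Real.cos k - Real.cos pF| ≤ 4/3 * (a₀ * γ ^ (h + 1)) := by
    have h1 : (1 + α) * |Real.cos k - Real.cos pF| ≤ a₀ * γ ^ (h + 1) := by
      rw [← abs_of_pos (show (0:ℝ) < 1 + α by linarith), ← abs_mul]
      exact hcut
    have h2 := mul_le_mul_of_nonneg_right hα1 (abs_nonneg (Real.cos k - Real.cos pF))
    linarith
  -- lower bound for sin of the half-sum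
  have hsin_s : Real.sin (pF/4) ≤ Real.sin ((k + pF)/2) := by
    have hs1 : pF/4 ≤ (k + pF)/2 := by linarith
    have hs2 : (k + pF)/2 ≤ 2*Real.pi/3 := by linarith
    rcases le_or_gt ((k + pF)/2) (Real.pi/2) with hc | hc
    · exact Real.sin_le_sin_of_le_of_le_pi_div_two (by linarith) hc hs1
    · calc Real.sin (pF/4) ≤ Real.sin (Real.pi - (k + pF)/2) :=
            Real.sin_le_sin_of_le_of_le_pi_div_two (by linarith) (by linarith) (by linarith)
        _ = Real.sin ((k + pF)/2) := Real.sin_pi_sub _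
  have hsin_pos : 0 < Real.sin (pF/4) :=
    Real.sin_pos_of_pos_of_lt_pi (by linarith) (by linarith)
  have hsinlb : 2/Real.pi * (pF/4) ≤ Real.sin (pF/4) :=
    Real.mul_le_sin (by linarith) (by linarith)
  have hsinsnn : 0 ≤ Real.sin ((k + pF)/2) := hsin_pos.le.trans hsin_s
  -- lower bound for |sin| of the half-difference
  have hdabs : |(k - pF)/2| ≤ Real.pi/2 := by
    rw [abs_le]; constructor <;> linarith
  have hdlb : 2/Real.pi * |(k - pF)/2| ≤ |Real.sin ((k - pF)/2)| :=
    Real.mul_abs_le_abs_sin hdabs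
  -- product-of-sines identity
  have hid : |Real.cos k - Real.cos pF|
      = 2 * (Real.sin ((k + pF)/2) * |Real.sin ((k - pF)/2)|) := by
    rw [Real.cos_sub_cos, abs_mul, abs_mul, abs_of_nonneg hsinsnn]
    norm_num; ring
  have step1 : 2/Real.pi * (pF/4) * (2/Real.pi * |(k - pF)/2|)
      ≤ Real.sin ((k + pF)/2) * |Real.sin ((k - pF)/2)| :=
    mul_le_mul (hsinlb.trans hsin_s) hdlb (by positivity) hsinsnn
  have hA : pF * |k - pF| ≤ 4/3 * Real.pi^2 * (a₀ * γ ^ (h + 1)) := by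
    have h2 : pF * |k - pF| / Real.pi^2 ≤ 4/3 * (a₀ * γ ^ (h + 1)) := by
      have habs2 : |(k - pF)/2| = |k - pF|/2 := by
        rw [abs_div, abs_two]
      calc pF * |k - pF| / Real.pi^2
          = 2 * (2/Real.pi * (pF/4) * (2/Real.pi * (|k - pF|/2))) := by
            field_simp; ring
        _ = 2 * (2/Real.pi * (pF/4) * (2/Real.pi * |(k - pF)/2|)) := by rw [habs2]
        _ ≤ 2 * (Real.sin ((k + pF)/2) * |Real.sin ((k - pF)/2)|) := by linarith [step1]
        _ = |Real.cos k - Real.cos pF| := hid.symm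
        _ ≤ 4/3 * (a₀ * γ ^ (h + 1)) := hΔ
    rw [div_le_iff₀ (by positivity)] at h2
    linarith
  -- upper bound on √(1 - cos pF)
  have hsqrt_id : Real.sqrt (1 - Real.cos pF) = Real.sqrt 2 * |Real.sin (pF/2)| := by
    rw [Real.abs_sin_half, ← Real.sqrt_mul (by norm_num : (0:ℝ) ≤ 2)]
    congr 1; ring
  have hsinhalf_pos : 0 < Real.sin (pF/2) :=
    Real.sin_pos_of_pos_of_lt_pi (by linarith) (by linarith)
  have hSpos : 0 < Real.sqrt (1 - Real.cos pF) := by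
    rw [hsqrt_id]
    exact mul_pos (Real.sqrt_pos.mpr (by norm_num)) (abs_pos.mpr hsinhalf_pos.ne')
  have hS2 : Real.sqrt (1 - Real.cos pF) ≤ Real.sqrt 2 * (pF/2) := by
    rw [hsqrt_id]
    have h1 : |Real.sin (pF/2)| ≤ pF/2 := by
      calc |Real.sin (pF/2)| ≤ |pF/2| := Real.abs_sin_le_abs
        _ = pF/2 := abs_of_pos (by linarith)
    exact mul_le_mul_of_nonneg_left h1 (Real.sqrt_nonneg 2)
  -- numeric bounds
  have hsqrt2 : Real.sqrt 2 ≤ 3/2 :=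
    Real.sqrt_le_iff.mpr ⟨by norm_num, by norm_num⟩
  have hπ315 : Real.pi < 63/20 := by linarith [Real.pi_lt_d2]
  have hπ2 : Real.pi^2 ≤ 10 := by
    have h1 := pow_lt_pow_left₀ hπ315 hπ.le (by norm_num : 2 ≠ 0)
    norm_num at h1
    linarith
  -- main bound
  have hfin : |k - pF| * Real.sqrt (1 - Real.cos pF) ≤ 20 * a₀ * γ * γ ^ h := by
    have hM : (0:ℝ) ≤ |k - pF| := abs_nonneg _
    have h1 : |k - pF| * Real.sqrt (1 - Real.cos pF)
        ≤ |k - pF| * (Real.sqrt 2 * (pF/2)) := mul_le_mul_of_nonneg_left hS2 hM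
    have hMpF : (0:ℝ) ≤ |k - pF| * pF := mul_nonneg hM hpF0.le
    have hA' : pF * |k - pF| ≤ 4/3 * 10 * (a₀ * γ ^ (h + 1)) := by
      have h4 : (0:ℝ) ≤ (10 - Real.pi^2) * (a₀ * γ ^ (h + 1)) :=
        mul_nonneg (by linarith) hXpos.le
      linarith [hA, h4]
    have h20 : 20 * a₀ * γ * γ ^ h = 20 * (a₀ * γ ^ (h + 1)) := by
      rw [hγh1]; ring
    rw [h20]
    have h3 := mul_le_mul_of_nonneg_right hsqrt2
      (by positivity : (0:ℝ) ≤ |k - pF| * pF / 2)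
    linarith [h1, h3, hA', hXpos]
  have hmain : |k - pF| ≤ 20 * a₀ * γ * γ ^ (h : ℝ) / Real.sqrt (1 - Real.cos pF) := by
    rw [hrpow, le_div_iff₀ hSpos]
    exact hfin
  refine ⟨hmain, le_trans ?_ hmain⟩
  calc |Real.sin (k - pF)| ≤ |k - pF| := Real.abs_sin_le_abs
    _ ≤ |k - pF| := le_refl _
end
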